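/- arXiv:1007.1087 — 7 statements merged into one kernel-verified Lean document; each statement's English description precedes it below -/
import Mathlib

section
/- The social welfare optimization problem SWO has an optimal solution, and its optimal effective-resource vector is unique: there exists a feasible demand matrix maximizing u, and if q and q' are both feasible demand matrices maximizing u(q) = ∑_{i=1}^I u_i(x_i(q)) over feasible matrices, then x_i(q) = x_i(q') for every user i. -/
/-- A demand matrix is feasible if it is componentwise nonnegative and the
demand to each provider equals its supply. -/
def Feasible {I J : ℕ} (Q : Fin J → ℝ) (q : Fin I → Fin J → ℝ) : Prop :=
  (∀ i j, 0 ≤ q i j) ∧ ∀ j, ∑ i, q i j = Q j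

/-- The effective resource of user `i` under demand matrix `q`. -/
def effRes {I J : ℕ} (c q : Fin I → Fin J → ℝ) (i : Fin I) : ℝ :=
  ∑ j, q i j * c i j

/-- The social welfare of a demand matrix. -/
def welfare {I J : ℕ} (u : Fin I → ℝ → ℝ) (c q : Fin I → Fin J → ℝ) : ℝ :=
  ∑ i, u i (effRes c q i)

section ConcaveMaximizers

variable {ι E : Type*} [Fintype ι] [AddCommGroup E] [Module ℝ E]

/- If two maximizers gave different values to some `L i`, their midpoint would do strictly
better in that coordinate and at least as well in every other one. -/
theorem IsMaxOn.linearMap_eq_of_strictConcaveOn {s : Set E} (hs : Convex ℝ s)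
    {g : ι → ℝ → ℝ} (hg : ∀ i, StrictConcaveOn ℝ Set.univ (g i)) (L : ι → E →ₗ[ℝ] ℝ)
    {x y : E} (hx : x ∈ s) (hy : y ∈ s)
    (hx_max : IsMaxOn (fun z => ∑ i, g i (L i z)) s x)
    (hy_max : IsMaxOn (fun z => ∑ i, g i (L i z)) s y) (i : ι) :
    L i x = L i y := by
  by_contra hne
  set m : E := (1 / 2 : ℝ) • x + (1 / 2 : ℝ) • y
  have hm : m ∈ s := hs hx hy (by norm_num) (by norm_num) (by norm_num)
  have hLm : ∀ k, L k m = (1 / 2 : ℝ) • L k x + (1 / 2 : ℝ) • L k y := fun k => by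
    simp only [m, map_add, map_smul]
  have hle : ∀ k, (1 / 2 : ℝ) * g k (L k x) + (1 / 2 : ℝ) * g k (L k y) ≤ g k (L k m) :=
    fun k => hLm k ▸ (hg k).concaveOn.2 (Set.mem_univ _) (Set.mem_univ _)
      (by norm_num) (by norm_num) (by norm_num)
  have hlt : (1 / 2 : ℝ) * g i (L i x) + (1 / 2 : ℝ) * g i (L i y) < g i (L i m) :=
    hLm i ▸ (hg i).2 (Set.mem_univ _) (Set.mem_univ _) hne
      (by norm_num) (by norm_num) (by norm_num)
  have hsum := Finset.sum_lt_sum (fun k _ => hle k) ⟨i, Finset.mem_univ i, hlt⟩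
  rw [Finset.sum_add_distrib, ← Finset.mul_sum, ← Finset.mul_sum] at hsum
  linarith [isMaxOn_iff.1 hx_max m hm, isMaxOn_iff.1 hx_max y hy, isMaxOn_iff.1 hy_max x hx]

end ConcaveMaximizers

section Feasible

variable {I J : ℕ}

def effResₗ (c : Fin I → Fin J → ℝ) (i : Fin I) : (Fin I → Fin J → ℝ) →ₗ[ℝ] ℝ where
  toFun q := effRes c q i
  map_add' q q' := by simp only [effRes, Pi.add_apply, add_mul, Finset.sum_add_distrib]
  map_smul' a q := by simp only [effRes, Pi.smul_apply, smul_eq_mul, mul_assoc,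
    Finset.mul_sum, RingHom.id_apply]

theorem convex_setOf_feasible (Q : Fin J → ℝ) :
    Convex ℝ {q : Fin I → Fin J → ℝ | Feasible Q q} := by
  rintro q ⟨hq_nonneg, hq_sum⟩ q' ⟨hq'_nonneg, hq'_sum⟩ a b ha hb hab
  refine ⟨fun i j => ?_, fun j => ?_⟩
  · have := hq_nonneg i j
    have := hq'_nonneg i j
    simp only [Pi.add_apply, Pi.smul_apply, smul_eq_mul]
    positivity
  · simp only [Pi.add_apply, Pi.smul_apply, smul_eq_mul, Finset.sum_add_distrib,
      ← Finset.mul_sum, hq_sum, hq'_sum, ← add_mul, hab, one_mul]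

theorem isClosed_setOf_feasible (Q : Fin J → ℝ) :
    IsClosed {q : Fin I → Fin J → ℝ | Feasible Q q} := by
  simp only [Feasible, Set.ofPred_and, Set.ofPred_forall]
  exact (isClosed_iInter fun i => isClosed_iInter fun j =>
    isClosed_le continuous_const (by fun_prop)).inter
      (isClosed_iInter fun j => isClosed_eq (by fun_prop) continuous_const)

theorem Feasible.mem_Icc {Q : Fin J → ℝ} {q : Fin I → Fin J → ℝ} (hq : Feasible Q q)
    (i : Fin I) (j : Fin J) : q i j ∈ Set.Icc 0 (Q j) :=
  ⟨hq.1 i j, hq.2 j ▸ Finset.single_le_sum (fun i' _ => hq.1 i' j) (Finset.mem_univ i)⟩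

theorem isCompact_setOf_feasible (Q : Fin J → ℝ) :
    IsCompact {q : Fin I → Fin J → ℝ | Feasible Q q} :=
  (isCompact_univ_pi fun _ => isCompact_univ_pi fun _ => isCompact_Icc).of_isClosed_subset
    (isClosed_setOf_feasible Q) fun _ hq i _ j _ => hq.mem_Icc i j

theorem setOf_feasible_nonempty (hI : 0 < I) {Q : Fin J → ℝ} (hQ : ∀ j, 0 ≤ Q j) :
    {q : Fin I → Fin J → ℝ | Feasible Q q}.Nonempty := by
  refine ⟨fun _ j => Q j / I, fun _ j => by have := hQ j; positivity, fun j => ?_⟩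
  rw [Finset.sum_const, Finset.card_univ, Fintype.card_fin, nsmul_eq_mul]
  field_simp

theorem continuous_welfare {u : Fin I → ℝ → ℝ} (hu : ∀ i, Continuous (u i))
    (c : Fin I → Fin J → ℝ) : Continuous (welfare u c) := by
  unfold welfare effRes
  fun_prop

end Feasible

theorem swo_exists_and_effective_resource_unique_general
    (I J : ℕ) (hI : 0 < I)
    (u : Fin I → ℝ → ℝ)
    (hu_conc : ∀ i, StrictConcaveOn ℝ Set.univ (u i))
    (Q : Fin J → ℝ) (hQ : ∀ j, 0 < Q j)
    (c : Fin I → Fin J → ℝ) :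
    (∃ q : Fin I → Fin J → ℝ, Feasible Q q ∧
      ∀ q' : Fin I → Fin J → ℝ, Feasible Q q' → welfare u c q' ≤ welfare u c q) ∧
    (∀ q q' : Fin I → Fin J → ℝ, Feasible Q q → Feasible Q q' →
      (∀ r : Fin I → Fin J → ℝ, Feasible Q r → welfare u c r ≤ welfare u c q) →
      (∀ r : Fin I → Fin J → ℝ, Feasible Q r → welfare u c r ≤ welfare u c q') →
      ∀ i, effRes c q i = effRes c q' i) := by
  have hu_cont : ∀ i, Continuous (u i) := fun i =>
    continuousOn_univ.1 ((hu_conc i).concaveOn.continuousOn isOpen_univ)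
  refine ⟨?_, fun q q' hq hq' hq_max hq'_max =>
    IsMaxOn.linearMap_eq_of_strictConcaveOn (convex_setOf_feasible Q) hu_conc (effResₗ c)
      hq hq' (isMaxOn_iff.2 hq_max) (isMaxOn_iff.2 hq'_max)⟩
  obtain ⟨q, hq, hq_max⟩ := (isCompact_setOf_feasible Q).exists_isMaxOn
    (setOf_feasible_nonempty hI fun j => (hQ j).le) (continuous_welfare hu_cont c).continuousOn
  exact ⟨q, hq, isMaxOn_iff.1 hq_max⟩

/-- The social welfare optimization problem SWO has an optimal
solution, and its optimal effective-resource vector is unique. -/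
theorem swo_exists_and_effective_resource_unique
    (I J : ℕ) (hI : 0 < I) (hJ : 0 < J)
    (u : Fin I → ℝ → ℝ)
    (hu_diff : ∀ i, Differentiable ℝ (u i))
    (hu_mono : ∀ i, StrictMono (u i))
    (hu_conc : ∀ i, StrictConcaveOn ℝ Set.univ (u i))
    (Q : Fin J → ℝ) (hQ : ∀ j, 0 < Q j)
    (c : Fin I → Fin J → ℝ) (hc : ∀ i j, 0 < c i j) :
    (∃ q : Fin I → Fin J → ℝ, Feasible Q q ∧
      ∀ q' : Fin I → Fin J → ℝ, Feasible Q q' → welfare u c q' ≤ welfare u c q) ∧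
    (∀ q q' : Fin I → Fin J → ℝ, Feasible Q q → Feasible Q q' →
      (∀ r : Fin I → Fin J → ℝ, Feasible Q r → welfare u c r ≤ welfare u c q) →
      (∀ r : Fin I → Fin J → ℝ, Feasible Q r → welfare u c r ≤ welfare u c q') →
      ∀ i, effRes c q i = effRes c q' i) :=
  swo_exists_and_effective_resource_unique_general I J hI u hu_conc Q hQ c
end

section
/- Let (q, p) be a KKT point of SWO. Suppose n ≥ 2, the users i_1,…,i_n are pairwise distinct, the providers j_1,…,j_n are pairwise distinct, and for each k = 1,…,n both q_{i_k j_k} > 0 and q_{i_k j_{k−1}} > 0, where j_0 denotes j_n (i.e., the support bipartite graph of q contains a cycle). Then ∏_{k=1}^n ( c_{i_k j_{k−1}} / c_{i_k j_k} ) = 1. -/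
/-- `(q, p)` is a KKT point of SWO. -/
def KKTPoint {I J : ℕ} (u : Fin I → ℝ → ℝ) (Q : Fin J → ℝ)
    (c q : Fin I → Fin J → ℝ) (p : Fin J → ℝ) : Prop :=
  Feasible Q q ∧ (∀ j, 0 < p j) ∧
  (∀ i j, deriv (u i) (effRes c q i) * c i j ≤ p j) ∧
  (∀ i j, q i j * (deriv (u i) (effRes c q i) * c i j - p j) = 0)

/-- If the support bipartite graph of a KKT point of SWO
contains a cycle `i₁, j₁, i₂, j₂, …, iₙ, jₙ` (with `j₀ = jₙ`), then the
product of the channel offset ratios around the cycle equals one. -/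
theorem kkt_cycle_product_eq_one
    (I J : ℕ) (hI : 0 < I) (hJ : 0 < J)
    (u : Fin I → ℝ → ℝ)
    (hu_diff : ∀ i, Differentiable ℝ (u i))
    (hu_mono : ∀ i, StrictMono (u i))
    (hu_conc : ∀ i, StrictConcaveOn ℝ Set.univ (u i))
    (Q : Fin J → ℝ) (hQ : ∀ j, 0 < Q j)
    (c : Fin I → Fin J → ℝ) (hc : ∀ i j, 0 < c i j)
    (q : Fin I → Fin J → ℝ) (p : Fin J → ℝ)
    (hKKT : KKTPoint u Q c q p)
    (n : ℕ) (hn : 2 ≤ n)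
    (ii : Fin n → Fin I) (jj : Fin n → Fin J)
    (hii : Function.Injective ii) (hjj : Function.Injective jj)
    (hq1 : ∀ k : Fin n, 0 < q (ii k) (jj k))
    (hq2 : ∀ k : Fin n, 0 < q (ii k) (jj (k - ⟨1, by omega⟩))) :
    ∏ k : Fin n, c (ii k) (jj (k - ⟨1, by omega⟩)) / c (ii k) (jj k) = 1 := by
  obtain ⟨hfeas, hp, hle, hcs⟩ := hKKT
  haveI : NeZero n := ⟨by omega⟩
  -- slackness: positive entry forces equality
  have key : ∀ (i : Fin I) (j : Fin J), 0 < q i j →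
      deriv (u i) (effRes c q i) * c i j = p j := by
    intro i j hq
    have := hcs i j
    have h2 : deriv (u i) (effRes c q i) * c i j - p j = 0 := by
      rcases mul_eq_zero.1 this with h | h
      · exact absurd h hq.ne'
      · exact h
    linarith
  have ratio : ∀ k : Fin n,
      c (ii k) (jj (k - ⟨1, by omega⟩)) / c (ii k) (jj k)
        = p (jj (k - ⟨1, by omega⟩)) / p (jj k) := by
    intro k
    have h1 := key (ii k) (jj k) (hq1 k)
    have h2 := key (ii k) (jj (k - ⟨1, by omega⟩)) (hq2 k)
    have hd : deriv (u (ii k)) (effRes c q (ii k)) ≠ 0 := by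
      intro h
      rw [h, zero_mul] at h1
      exact (hp (jj k)).ne h1
    rw [← h1, ← h2, mul_div_mul_left _ _ hd]
  calc ∏ k : Fin n, c (ii k) (jj (k - ⟨1, by omega⟩)) / c (ii k) (jj k)
      = ∏ k : Fin n, p (jj (k - ⟨1, by omega⟩)) / p (jj k) := by
        exact Finset.prod_congr rfl fun k _ => ratio k
    _ = (∏ k : Fin n, p (jj (k - ⟨1, by omega⟩))) / ∏ k : Fin n, p (jj k) := by
        rw [Finset.prod_div_distrib]
    _ = 1 := by
        have : (∏ k : Fin n, p (jj (k - ⟨1, by omega⟩))) = ∏ k : Fin n, p (jj k) := by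
          exact Fintype.prod_equiv (Equiv.subRight (⟨1, by omega⟩ : Fin n)) _ _ (fun k => rfl)
        rw [this]
        exact div_self (Finset.prod_pos fun k _ => hp (jj k)).ne'
end

section
/- Let U and W be finite sets (users and providers), and let E ⊆ U × W be an edge set whose associated bipartite graph contains no cycles (it is a forest). Let c : U × W → ℝ satisfy c(i,j) > 0 for all (i,j). Suppose q, q' : U × W → ℝ both vanish outside E, satisfy ∑_{j : (i,j) ∈ E} q(i,j)·c(i,j) = ∑_{j : (i,j) ∈ E} q'(i,j)·c(i,j) for every i ∈ U, and satisfy ∑_{i : (i,j) ∈ E} q(i,j) = ∑_{i : (i,j) ∈ E} q'(i,j) for every j ∈ W. Then q = q'. -/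
/-- A bipartite graph with parts `U`, `W` and edge set `E ⊆ U × W` contains a
cycle: there are `n ≥ 2`, pairwise distinct `i₁,…,iₙ ∈ U` and pairwise
distinct `j₁,…,jₙ ∈ W` with `(iₖ, jₖ) ∈ E` and `(iₖ, jₖ₋₁) ∈ E` for all `k`
(where `j₀ = jₙ`). -/
def HasCycle {U W : Type*} (E : Set (U × W)) : Prop :=
  ∃ (n : ℕ) (_hn : 2 ≤ n) (ii : Fin n → U) (jj : Fin n → W),
    Function.Injective ii ∧ Function.Injective jj ∧
    ∀ k : Fin n, (ii k, jj k) ∈ E ∧ (ii k, jj (k - ⟨1, by omega⟩)) ∈ E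

lemma hasCycle_mono {U W : Type*} {S E : Set (U × W)} (h : S ⊆ E) :
    HasCycle S → HasCycle E := by
  rintro ⟨n, hn, ii, jj, hii, hjj, hedge⟩
  exact ⟨n, hn, ii, jj, hii, hjj, fun k => ⟨h (hedge k).1, h (hedge k).2⟩⟩

lemma sum_ne_single {α : Type*} {s : Finset α} {f : α → ℝ}
    (h : ∑ x ∈ s, f x = 0) {a : α} (ha : a ∈ s) (hfa : f a ≠ 0) :
    ∃ b ∈ s, b ≠ a ∧ f b ≠ 0 := by
  by_contra hb
  push_neg at hb
  rw [Finset.sum_eq_single_of_mem a ha (fun b hbs hba => hb b hbs hba)] at h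
  exact hfa h

lemma hasCycle_of_degree_two {U W : Type*} [Fintype U]
    (S : Set (U × W)) (hne : S.Nonempty)
    (hrow : ∀ e ∈ S, ∃ j', j' ≠ e.2 ∧ (e.1, j') ∈ S)
    (hcol : ∀ e ∈ S, ∃ i', i' ≠ e.1 ∧ (i', e.2) ∈ S) :
    HasCycle S := by
  classical
  have hstep : ∀ e : {e : U × W // e ∈ S}, ∃ e' : U × W,
      e' ∈ S ∧ e'.1 ≠ e.1.1 ∧ e'.2 ≠ e.1.2 ∧ (e'.1, e.1.2) ∈ S := by
    rintro ⟨e, he⟩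
    obtain ⟨i', hi', hiS⟩ := hcol e he
    obtain ⟨j', hj', hjS⟩ := hrow (i', e.2) hiS
    exact ⟨(i', j'), hjS, hi', hj', hiS⟩
  obtain ⟨e₀, he₀⟩ := hne
  let p : ℕ → {e : U × W // e ∈ S} := fun n =>
    Nat.rec ⟨e₀, he₀⟩ (fun _ pk => ⟨(hstep pk).choose, (hstep pk).choose_spec.1⟩) n
  set ik : ℕ → U := fun n => (p n).1.1 with hik
  set jk : ℕ → W := fun n => (p n).1.2 with hjk
  have hmem : ∀ n, (ik n, jk n) ∈ S := fun n => (p n).2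
  have hi_ne : ∀ n, ik (n + 1) ≠ ik n := fun n => (hstep (p n)).choose_spec.2.1
  have hj_ne : ∀ n, jk (n + 1) ≠ jk n := fun n => (hstep (p n)).choose_spec.2.2.1
  have hcross : ∀ n, (ik (n + 1), jk n) ∈ S := fun n => (hstep (p n)).choose_spec.2.2.2
  -- a repetition exists
  have hrep : ∃ l, ∃ k, k < l ∧ (ik k = ik l ∨ jk k = jk l) := by
    obtain ⟨x, y, hxy, hxyeq⟩ := Finite.exists_ne_map_eq_of_infinite ik
    rcases lt_or_gt_of_ne hxy with h | h
    · exact ⟨y, x, h, Or.inl hxyeq⟩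
    · exact ⟨x, y, h, Or.inl hxyeq.symm⟩
  set l := Nat.find hrep with hl
  have hmin : ∀ m, m < l → ∀ k', k' < m → ik k' ≠ ik m ∧ jk k' ≠ jk m := by
    intro m hm k' hk'
    have h1 := Nat.find_min hrep hm
    push_neg at h1
    exact h1 k' hk'
  -- helper for Fin subtraction
  have hsub : ∀ (n : ℕ) (hn : 2 ≤ n) (m : Fin n),
      ((m - ⟨1, by omega⟩ : Fin n) : ℕ) = if (m : ℕ) = 0 then n - 1 else (m : ℕ) - 1 := by
    intro n hn m
    rw [Fin.sub_def]
    simp only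
    split
    · next h => rw [h]; simp [Nat.mod_eq_of_lt (show n - 1 < n by omega)]
    · next h =>
        have h2 : n - 1 + (m : ℕ) = ((m : ℕ) - 1) + 1 * n := by
          have := m.2; omega
        rw [h2, Nat.add_mul_mod_self_right, Nat.mod_eq_of_lt (by have := m.2; omega)]
  by_cases hA : ∃ k', k' < l ∧ ik k' = ik l
  · -- case A: a repeated user vertex
    obtain ⟨k, hkl, hkeq⟩ := hA
    have hn2 : 2 ≤ l - k := by
      rcases Nat.lt_or_ge (l - k) 2 with h | h
      · exfalso
        have : l = k + 1 := by omega
        exact hi_ne k (by rw [← this, ← hkeq])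
      · exact h
    obtain ⟨n, hn⟩ : ∃ n, n = l - k := ⟨l - k, rfl⟩
    rw [← hn] at hn2
    refine ⟨n, hn2, fun m => ik (k + (m : ℕ)), fun m => jk (k + (m : ℕ)), ?_, ?_, ?_⟩
    · intro a b hab
      by_contra hne'
      rcases lt_or_gt_of_ne (fun h : (a : ℕ) = (b : ℕ) => hne' (Fin.ext h)) with h | h
      · exact (hmin (k + (b : ℕ)) (by have hb2 := b.2; omega) (k + (a : ℕ)) (by omega)).1 hab
      · exact (hmin (k + (a : ℕ)) (by have ha2 := a.2; omega) (k + (b : ℕ)) (by omega)).1 hab.symm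
    · intro a b hab
      by_contra hne'
      rcases lt_or_gt_of_ne (fun h : (a : ℕ) = (b : ℕ) => hne' (Fin.ext h)) with h | h
      · exact (hmin (k + (b : ℕ)) (by have hb2 := b.2; omega) (k + (a : ℕ)) (by omega)).2 hab
      · exact (hmin (k + (a : ℕ)) (by have ha2 := a.2; omega) (k + (b : ℕ)) (by omega)).2 hab.symm
    · intro m
      refine ⟨hmem _, ?_⟩
      beta_reduce
      have hv := hsub n hn2 m
      rw [hv]
      by_cases hm : (m : ℕ) = 0
      · rw [if_pos hm, hm]
        have h1 : k + 0 = k := by omega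
        have h2 : k + (n - 1) = l - 1 := by omega
        rw [h1, h2, hkeq]
        have h3 : l = (l - 1) + 1 := by omega
        rw [h3]
        exact hcross (l - 1)
      · rw [if_neg hm]
        have h1 : k + (m : ℕ) = (k + ((m : ℕ) - 1)) + 1 := by have := m.2; omega
        rw [h1]
        exact hcross _
  · -- case B: a repeated provider vertex
    push_neg at hA
    obtain ⟨k, hkl, hkeq⟩ := Nat.find_spec hrep
    rw [← hl] at hkl hkeq
    have hkeq' : jk k = jk l := by
      rcases hkeq with h | h
      · exact absurd h (hA k hkl)
      · exact h
    have hn2 : 2 ≤ l - k := by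
      rcases Nat.lt_or_ge (l - k) 2 with h | h
      · exfalso
        have : l = k + 1 := by omega
        exact hj_ne k (by rw [← this, ← hkeq'])
      · exact h
    obtain ⟨n, hn⟩ : ∃ n, n = l - k := ⟨l - k, rfl⟩
    rw [← hn] at hn2
    have hIdist : ∀ a b, a < b → b ≤ l → ik a ≠ ik b := by
      intro a b hab hbl
      rcases Nat.lt_or_ge b l with h | h
      · exact (hmin b h a hab).1
      · have : b = l := by omega
        rw [this]; exact hA a (by omega)
    have hJdist : ∀ a b, a < b → b ≤ l → k < a → jk a ≠ jk b := by
      intro a b hab hbl hka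
      rcases Nat.lt_or_ge b l with h | h
      · exact (hmin b h a hab).2
      · have hb : b = l := by omega
        rw [hb, ← hkeq']
        exact fun hc => (hmin a (by omega) k hka).2 hc.symm
    refine ⟨n, hn2, fun m => ik (k + 1 + (m : ℕ)), fun m => jk (k + 1 + (m : ℕ)), ?_, ?_, ?_⟩
    · intro a b hab
      by_contra hne'
      rcases lt_or_gt_of_ne (fun h : (a : ℕ) = (b : ℕ) => hne' (Fin.ext h)) with h | h
      · exact hIdist (k + 1 + (a : ℕ)) (k + 1 + (b : ℕ)) (by omega) (by have hb2 := b.2; omega) hab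
      · exact hIdist (k + 1 + (b : ℕ)) (k + 1 + (a : ℕ)) (by omega) (by have ha2 := a.2; omega) hab.symm
    · intro a b hab
      by_contra hne'
      rcases lt_or_gt_of_ne (fun h : (a : ℕ) = (b : ℕ) => hne' (Fin.ext h)) with h | h
      · exact hJdist (k + 1 + (a : ℕ)) (k + 1 + (b : ℕ)) (by omega) (by have hb2 := b.2; omega) (by omega) hab
      · exact hJdist (k + 1 + (b : ℕ)) (k + 1 + (a : ℕ)) (by omega) (by have ha2 := a.2; omega) (by omega) hab.symm
    · intro m
      refine ⟨hmem _, ?_⟩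
      beta_reduce
      have hv := hsub n hn2 m
      rw [hv]
      by_cases hm : (m : ℕ) = 0
      · rw [if_pos hm, hm]
        have h2 : k + 1 + (n - 1) = l := by omega
        have h1 : k + 1 + 0 = k + 1 := by omega
        rw [h1, h2, ← hkeq']
        exact hcross k
      · rw [if_neg hm]
        have h1 : k + 1 + (m : ℕ) = (k + 1 + ((m : ℕ) - 1)) + 1 := by have := m.2; omega
        rw [h1]
        exact hcross _

/-- On a bipartite forest, a vector supported on the edges is
uniquely determined by its weighted check-sums at the user nodes and its
check-sums at the provider nodes. -/
theorem forest_flow_unique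
    {U W : Type*} [Fintype U] [Fintype W]
    (E : Set (U × W)) [DecidablePred (· ∈ E)]
    (hforest : ¬ HasCycle E)
    (c : U × W → ℝ) (hc : ∀ e, 0 < c e)
    (q q' : U × W → ℝ)
    (hq0 : ∀ e, e ∉ E → q e = 0)
    (hq'0 : ∀ e, e ∉ E → q' e = 0)
    (huser : ∀ i : U,
      ∑ j ∈ Finset.univ.filter (fun j => (i, j) ∈ E), q (i, j) * c (i, j) =
      ∑ j ∈ Finset.univ.filter (fun j => (i, j) ∈ E), q' (i, j) * c (i, j))
    (hprov : ∀ j : W,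
      ∑ i ∈ Finset.univ.filter (fun i => (i, j) ∈ E), q (i, j) =
      ∑ i ∈ Finset.univ.filter (fun i => (i, j) ∈ E), q' (i, j)) :
    q = q' := by
  classical
  by_contra hne
  obtain ⟨e₀, he₀⟩ := Function.ne_iff.mp hne
  set S : Set (U × W) := {e | q e ≠ q' e} with hS
  have hSE : S ⊆ E := by
    intro e he
    by_contra heE
    exact he (by rw [hq0 e heE, hq'0 e heE])
  apply hforest
  apply hasCycle_mono hSE
  apply hasCycle_of_degree_two S ⟨e₀, he₀⟩
  · -- row condition
    rintro ⟨i, j⟩ he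
    have hij : (i, j) ∈ E := hSE he
    have h0 : ∑ j' ∈ Finset.univ.filter (fun j' => (i, j') ∈ E),
        (q (i, j') - q' (i, j')) * c (i, j') = 0 := by
      simp only [sub_mul, Finset.sum_sub_distrib]
      rw [huser i, sub_self]
    have hfa : (q (i, j) - q' (i, j)) * c (i, j) ≠ 0 :=
      mul_ne_zero (sub_ne_zero_of_ne he) (ne_of_gt (hc _))
    obtain ⟨b, hbs, hbne, hbf⟩ := sum_ne_single h0 (by simp [hij]) hfa
    exact ⟨b, hbne, fun hc => hbf (by rw [sub_eq_zero.mpr hc, zero_mul])⟩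
  · -- column condition
    rintro ⟨i, j⟩ he
    have hij : (i, j) ∈ E := hSE he
    have h0 : ∑ i' ∈ Finset.univ.filter (fun i' => (i', j) ∈ E),
        (q (i', j) - q' (i', j)) = 0 := by
      rw [Finset.sum_sub_distrib, hprov j, sub_self]
    have hfa : q (i, j) - q' (i, j) ≠ 0 := sub_ne_zero_of_ne he
    obtain ⟨b, hbs, hbne, hbf⟩ := sum_ne_single h0 (by simp [hij]) hfa
    exact ⟨b, hbne, fun hc => hbf (sub_eq_zero.mpr hc)⟩
end

section
/- Suppose the channel quality offsets are generic, and let p ∈ ℝ^J with p_j > 0 for all j. Then the preference bipartite graph, whose edge set is { (i,j) : p_j/c_{ij} = min_{k ∈ {1,…,J}} p_k/c_{ik} }, contains no cycles: there do not exist n ≥ 2, pairwise distinct users i_1,…,i_n and pairwise distinct providers j_1,…,j_n such that (i_k, j_k) and (i_k, j_{k−1}) are all edges, where j_0 denotes j_n. -/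
/-- The channel quality offsets are generic: no cycle of distinct users and
distinct providers has offset-ratio product equal to one. -/
def Generic {I J : ℕ} (c : Fin I → Fin J → ℝ) : Prop :=
  ∀ (n : ℕ) (_hn : 2 ≤ n) (ii : Fin n → Fin I) (jj : Fin n → Fin J),
    Function.Injective ii → Function.Injective jj →
    ∏ k : Fin n, c (ii k) (jj (k - ⟨1, by omega⟩)) / c (ii k) (jj k) ≠ 1

/-- If the channel quality offsets are generic, then for any
positive price vector the preference bipartite graph contains no cycle. -/
theorem preference_graph_no_cycle_of_generic
    (I J : ℕ) (hI : 0 < I) (hJ : 0 < J)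
    (c : Fin I → Fin J → ℝ) (hc : ∀ i j, 0 < c i j)
    (hgen : Generic c)
    (p : Fin J → ℝ) (hp : ∀ j, 0 < p j) :
    ¬ HasCycle {e : Fin I × Fin J |
        p e.2 / c e.1 e.2 = ⨅ k : Fin J, p k / c e.1 k} := by
  rintro ⟨n, hn, ii, jj, hii, hjj, hE⟩
  haveI : NeZero n := ⟨by omega⟩
  apply hgen n hn ii jj hii hjj
  have key : ∀ k : Fin n, c (ii k) (jj (k - ⟨1, by omega⟩)) / c (ii k) (jj k)
      = p (jj (k - ⟨1, by omega⟩)) / p (jj k) := by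
    intro k
    have h1 := (hE k).1
    have h2 := (hE k).2
    simp only [Set.mem_setOf_eq] at h1 h2
    have heq : p (jj k) / c (ii k) (jj k)
        = p (jj (k - ⟨1, by omega⟩)) / c (ii k) (jj (k - ⟨1, by omega⟩)) := by
      rw [h1, h2]
    have hc1 := (hc (ii k) (jj k)).ne'
    have hc2 := (hc (ii k) (jj (k - ⟨1, by omega⟩))).ne'
    have hp1 := (hp (jj k)).ne'
    field_simp at heq ⊢
    linarith
  rw [Finset.prod_congr rfl (fun k _ => key k), Finset.prod_div_distrib]
  rw [div_eq_one_iff_eq]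
  · exact Equiv.prod_comp (Equiv.subRight (⟨1, by omega⟩ : Fin n)) (fun k => p (jj k))
  · exact Finset.prod_ne_zero_iff.mpr fun k _ => (hp (jj k)).ne'
end

section
/- Let (q*, p*) be a KKT point of SWO, and let (q(t), p(t)) be a solution trajectory of the primal-dual algorithm with positive update rates k^q_{ij} and k^p_j. Then the La Salle function V(t) = ∑_{i,j} (1/k^q_{ij})·( q_{ij}(t)²/2 − q*_{ij}·q_{ij}(t) ) + ∑_j (1/k^p_j)·( p_j(t)²/2 − p*_j·p_j(t) ) is non-increasing: its derivative satisfies V'(t) ≤ 0 for every t. -/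
/-- The projection `(x)⁺_y`: equals `x` if `y > 0`, and `max x 0` if `y ≤ 0`. -/
noncomputable def projPlus (x y : ℝ) : ℝ := if 0 < y then x else max x 0

/-!
Differentiating `V` along the trajectory gives `Σ (q - q*) · (projected primal field) +
Σ (p - p*) · (projected dual field)`. Each projection only acts where the coordinate is `0`,
and there it moves the field in the direction that can only lower the product, because
`q*, p* ≥ 0`; so `V'` is bounded by the same pairing with the unprojected fields, i.e. with the
gradient of the Lagrangian `L(q, p) = Σ uᵢ(xᵢ(q)) - Σ pⱼ (Σᵢ qᵢⱼ - Qⱼ)`. Using feasibility and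
complementary slackness of `(q*, p*)`, that pairing splits as
`Σᵢ (uᵢ'(xᵢ(q)) - uᵢ'(xᵢ(q*))) (xᵢ(q) - xᵢ(q*)) + Σ (uᵢ'(xᵢ(q*)) cᵢⱼ - p*ⱼ) qᵢⱼ`,
which is `≤ 0` termwise: the first sum by concavity (`uᵢ'` is antitone), the second by
dual feasibility of the KKT point and `q ≥ 0`.
-/

open Finset

lemma sub_mul_projPlus_le {x y y₀ : ℝ} (hy : 0 ≤ y) (hy₀ : 0 ≤ y₀) :
    (y - y₀) * projPlus x y ≤ (y - y₀) * x := by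
  unfold projPlus
  split_ifs with hpos
  · exact le_rfl
  · obtain rfl : y = 0 := le_antisymm (not_lt.mp hpos) hy
    exact mul_le_mul_of_nonpos_left (le_max_left x 0) (by linarith)

lemma HasDerivAt.one_div_mul_sq_half_sub_mul {f : ℝ → ℝ} {k v t : ℝ} (a : ℝ)
    (hf : HasDerivAt f (k * v) t) (hk : k ≠ 0) :
    HasDerivAt (fun s => 1 / k * (f s ^ 2 / 2 - a * f s)) ((f t - a) * v) t := by
  refine ((((hf.fun_pow 2).div_const 2).fun_sub (hf.const_mul a)).const_mul (1 / k)).congr_deriv ?_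
  field_simp
  ring

lemma ConcaveOn.deriv_sub_mul_sub_nonpos {f : ℝ → ℝ} (hf : ConcaveOn ℝ Set.univ f)
    (hd : Differentiable ℝ f) (x y : ℝ) : (deriv f x - deriv f y) * (x - y) ≤ 0 := by
  have hanti : Antitone (deriv f) := by
    simpa using hf.antitoneOn_deriv fun x _ => hd.differentiableAt
  exact (hanti.antivary monotone_id).sub_mul_sub_nonpos y x

section KKT

variable {I J : ℕ} {u : Fin I → ℝ → ℝ} {Q : Fin J → ℝ} {c qs : Fin I → Fin J → ℝ}
  {ps : Fin J → ℝ}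

lemma Feasible.sum_sub_eq_sum_sub (hf : Feasible Q qs) (q : Fin I → Fin J → ℝ) (j : Fin J) :
    ∑ i, q i j - Q j = ∑ i, (q i j - qs i j) := by
  rw [sum_sub_distrib, hf.2 j]

lemma KKTPoint.lagrangian_gradient_pairing_nonpos (hKKT : KKTPoint u Q c qs ps)
    (hu_diff : ∀ i, Differentiable ℝ (u i)) (hu_conc : ∀ i, ConcaveOn ℝ Set.univ (u i))
    {q : Fin I → Fin J → ℝ} (hq : ∀ i j, 0 ≤ q i j) (p : Fin J → ℝ) :
    ∑ i, ∑ j, (q i j - qs i j) * (deriv (u i) (effRes c q i) * c i j - p j) +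
      ∑ j, (p j - ps j) * (∑ i, q i j - Q j) ≤ 0 := by
  obtain ⟨hfeas, -, hdual, hslack⟩ := hKKT
  set g := fun i => deriv (u i) (effRes c q i)
  set gs := fun i => deriv (u i) (effRes c qs i)
  have hsplit : ∀ i j,
      (q i j - qs i j) * (g i * c i j - p j) + (p j - ps j) * (q i j - qs i j) =
        (g i - gs i) * (q i j * c i j - qs i j * c i j) + (gs i * c i j - ps j) * q i j :=
    fun i j => by linear_combination -hslack i j
  calc ∑ i, ∑ j, (q i j - qs i j) * (g i * c i j - p j) + ∑ j, (p j - ps j) * (∑ i, q i j - Q j)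
      = ∑ i, (g i - gs i) * (effRes c q i - effRes c qs i) +
          ∑ i, ∑ j, (gs i * c i j - ps j) * q i j := by
        simp only [hfeas.sum_sub_eq_sum_sub, mul_sum, effRes, ← sum_sub_distrib]
        rw [sum_comm (γ := Fin J), ← sum_add_distrib, ← sum_add_distrib]
        simp only [← sum_add_distrib, hsplit]
    _ ≤ 0 := by
        refine add_nonpos
          (sum_nonpos fun i _ => (hu_conc i).deriv_sub_mul_sub_nonpos (hu_diff i) _ _)
          (sum_nonpos fun i _ => sum_nonpos fun j _ => ?_)
        exact mul_nonpos_of_nonpos_of_nonneg (sub_nonpos.mpr (hdual i j)) (hq i j)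

end KKT

theorem laSalle_function_nonincreasing_general
    (I J : ℕ)
    (u : Fin I → ℝ → ℝ)
    (hu_diff : ∀ i, Differentiable ℝ (u i))
    (hu_conc : ∀ i, StrictConcaveOn ℝ Set.univ (u i))
    (Q : Fin J → ℝ)
    (c : Fin I → Fin J → ℝ)
    (qstar : Fin I → Fin J → ℝ) (pstar : Fin J → ℝ)
    (hKKT : KKTPoint u Q c qstar pstar)
    (kq : Fin I → Fin J → ℝ) (hkq : ∀ i j, 0 < kq i j)
    (kp : Fin J → ℝ) (hkp : ∀ j, 0 < kp j)
    (q : ℝ → Fin I → Fin J → ℝ) (p : ℝ → Fin J → ℝ)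
    (hqnn : ∀ t i j, 0 ≤ q t i j)
    (hpnn : ∀ t j, 0 ≤ p t j)
    (hqode : ∀ (i : Fin I) (j : Fin J) (t : ℝ),
      HasDerivAt (fun s => q s i j)
        (kq i j * projPlus
          (deriv (u i) (∑ j', q t i j' * c i j') * c i j - p t j)
          (q t i j)) t)
    (hpode : ∀ (j : Fin J) (t : ℝ),
      HasDerivAt (fun s => p s j)
        (kp j * projPlus ((∑ i, q t i j) - Q j) (p t j)) t) :
    ∀ t : ℝ,
      deriv (fun s =>
        (∑ i, ∑ j, (1 / kq i j) * ((q s i j) ^ 2 / 2 - qstar i j * q s i j)) +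
        ∑ j, (1 / kp j) * ((p s j) ^ 2 / 2 - pstar j * p s j)) t ≤ 0 := by
  intro t
  have hV :=
    (HasDerivAt.fun_sum (u := univ) fun i _ => HasDerivAt.fun_sum (u := univ) fun j _ =>
      (hqode i j t).one_div_mul_sq_half_sub_mul (qstar i j) (hkq i j).ne').fun_add
    (HasDerivAt.fun_sum (u := univ) fun j _ =>
      (hpode j t).one_div_mul_sq_half_sub_mul (pstar j) (hkp j).ne')
  rw [hV.deriv]
  refine le_trans ?_ (hKKT.lagrangian_gradient_pairing_nonpos hu_diff
    (fun i => (hu_conc i).concaveOn) (hqnn t) (p t))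
  exact add_le_add
    (sum_le_sum fun i _ => sum_le_sum fun j _ => sub_mul_projPlus_le (hqnn t i j) (hKKT.1.1 i j))
    (sum_le_sum fun j _ => sub_mul_projPlus_le (hpnn t j) (hKKT.2.1 j).le)

/-- Along any solution trajectory of the primal-dual
algorithm, the La Salle function `V` is non-increasing: `V'(t) ≤ 0`. -/
theorem laSalle_function_nonincreasing
    (I J : ℕ) (hI : 0 < I) (hJ : 0 < J)
    (u : Fin I → ℝ → ℝ)
    (hu_diff : ∀ i, Differentiable ℝ (u i))
    (hu_mono : ∀ i, StrictMono (u i))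
    (hu_conc : ∀ i, StrictConcaveOn ℝ Set.univ (u i))
    (Q : Fin J → ℝ) (hQ : ∀ j, 0 < Q j)
    (c : Fin I → Fin J → ℝ) (hc : ∀ i j, 0 < c i j)
    (qstar : Fin I → Fin J → ℝ) (pstar : Fin J → ℝ)
    (hKKT : KKTPoint u Q c qstar pstar)
    (kq : Fin I → Fin J → ℝ) (hkq : ∀ i j, 0 < kq i j)
    (kp : Fin J → ℝ) (hkp : ∀ j, 0 < kp j)
    (q : ℝ → Fin I → Fin J → ℝ) (p : ℝ → Fin J → ℝ)
    (hqnn : ∀ t i j, 0 ≤ q t i j)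
    (hpnn : ∀ t j, 0 ≤ p t j)
    (hqode : ∀ (i : Fin I) (j : Fin J) (t : ℝ),
      HasDerivAt (fun s => q s i j)
        (kq i j * projPlus
          (deriv (u i) (∑ j', q t i j' * c i j') * c i j - p t j)
          (q t i j)) t)
    (hpode : ∀ (j : Fin J) (t : ℝ),
      HasDerivAt (fun s => p s j)
        (kp j * projPlus ((∑ i, q t i j) - Q j) (p t j)) t) :
    ∀ t : ℝ,
      deriv (fun s =>
        (∑ i, ∑ j, (1 / kq i j) * ((q s i j) ^ 2 / 2 - qstar i j * q s i j)) +
        ∑ j, (1 / kp j) * ((p s j) ^ 2 / 2 - pstar j * p s j)) t ≤ 0 :=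
  laSalle_function_nonincreasing_general I J u hu_diff hu_conc Q c qstar pstar hKKT kq hkq kp hkp q
    p hqnn hpnn hqode hpode
end

section
/- Let N, I, J be positive integers, and let C be a real I×N matrix, K a real N×N matrix, A a real N×J matrix, K_p a real J×J matrix, f* ∈ ℝ^N, and Q ∈ ℝ^J. Suppose q : ℝ → ℝ^N and p : ℝ → ℝ^J are differentiable functions satisfying q'(t) = K·(f* − A·p(t)) and p'(t) = K_p·(Aᵀ·q(t) − Q) for all t, and suppose t ↦ C·q(t) is constant. Set B = C·K·A and D = K_p·Aᵀ·K·A. Then for every natural number n, the function t ↦ B·Dⁿ·p(t) is constant. -/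
open Matrix

/-
Differentiating `C q ≡ const` along `q' = K (f* − A p)` shows that `C K A p ≡ C K f*` is constant.
More generally, if `M q` is constant then so is `M K A p`, and if `M p` is constant then
differentiating along `p' = K_p (Aᵀ q − Q)` shows that `M K_p Aᵀ q` is constant. Alternating the
two steps multiplies the invariant matrix on the right by `D = K_p Aᵀ K A`, which gives the claim
by induction on `n`.
-/

variable {m n k : Type*} [Fintype m] [Fintype n] [Fintype k]

theorem Matrix.hasDerivAt_mulVec (M : Matrix m n ℝ) {x : ℝ → n → ℝ} {x' : n → ℝ} {t : ℝ}
    (hx : HasDerivAt x x' t) : HasDerivAt (fun s => M *ᵥ x s) (M *ᵥ x') t :=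
  M.mulVecLin.toContinuousLinearMap.hasFDerivAt.comp_hasDerivAt t hx

theorem Matrix.mulVec_eq_zero_of_hasDerivAt_of_mulVec_const (M : Matrix m n ℝ)
    {x : ℝ → n → ℝ} {x' : n → ℝ} {t : ℝ} (hx : HasDerivAt x x' t)
    (hM : ∀ s s', M *ᵥ x s = M *ᵥ x s') : M *ᵥ x' = 0 := by
  have hconst : (fun s => M *ᵥ x s) = fun _ => M *ᵥ x t := funext fun s => hM s t
  exact (M.hasDerivAt_mulVec hx).unique (hconst ▸ hasDerivAt_const t (M *ᵥ x t))

theorem mul_mul_mulVec_const_of_hasDerivAt_mulVec_sub_mulVec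
    (K : Matrix n n ℝ) (A : Matrix n k ℝ) (f : n → ℝ) {q : ℝ → n → ℝ} {p : ℝ → k → ℝ}
    (hq : ∀ t, HasDerivAt q (K *ᵥ (f - A *ᵥ p t)) t)
    (M : Matrix m n ℝ) (hM : ∀ t t', M *ᵥ q t = M *ᵥ q t') :
    ∀ t t', (M * K * A) *ᵥ p t = (M * K * A) *ᵥ p t' := by
  have hp : ∀ t, (M * K * A) *ᵥ p t = (M * K) *ᵥ f := fun t => by
    have h := M.mulVec_eq_zero_of_hasDerivAt_of_mulVec_const (hq t) hM
    rwa [mulVec_mulVec, mulVec_sub, sub_eq_zero, mulVec_mulVec, eq_comm] at h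
  exact fun t t' => (hp t).trans (hp t').symm

theorem mul_mul_mulVec_const_of_hasDerivAt_mulVec_mulVec_sub
    (Kp : Matrix k k ℝ) (R : Matrix k n ℝ) (Q : k → ℝ) {q : ℝ → n → ℝ} {p : ℝ → k → ℝ}
    (hp : ∀ t, HasDerivAt p (Kp *ᵥ (R *ᵥ q t - Q)) t)
    (M : Matrix m k ℝ) (hM : ∀ t t', M *ᵥ p t = M *ᵥ p t') :
    ∀ t t', (M * Kp * R) *ᵥ q t = (M * Kp * R) *ᵥ q t' := by
  have hq : ∀ t, (M * Kp * R) *ᵥ q t = (M * Kp) *ᵥ Q := fun t => by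
    have h := M.mulVec_eq_zero_of_hasDerivAt_of_mulVec_const (hp t) hM
    rwa [mulVec_mulVec, mulVec_sub, sub_eq_zero, mulVec_mulVec] at h
  exact fun t t' => (hq t).trans (hq t').symm

theorem primal_dual_invariant_price_relations_general
    (N I J : ℕ)
    (C : Matrix (Fin I) (Fin N) ℝ)
    (K : Matrix (Fin N) (Fin N) ℝ)
    (A : Matrix (Fin N) (Fin J) ℝ)
    (Kp : Matrix (Fin J) (Fin J) ℝ)
    (fstar : Fin N → ℝ) (Q : Fin J → ℝ)
    (q : ℝ → Fin N → ℝ) (p : ℝ → Fin J → ℝ)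
    (hq' : ∀ (t : ℝ) (i : Fin N),
      HasDerivAt (fun s => q s i) ((K.mulVec (fstar - A.mulVec (p t))) i) t)
    (hp' : ∀ (t : ℝ) (j : Fin J),
      HasDerivAt (fun s => p s j) ((Kp.mulVec (Aᵀ.mulVec (q t) - Q)) j) t)
    (hconst : ∀ t t' : ℝ, C.mulVec (q t) = C.mulVec (q t')) :
    ∀ (n : ℕ) (t t' : ℝ),
      (C * K * A * (Kp * Aᵀ * K * A) ^ n).mulVec (p t) =
      (C * K * A * (Kp * Aᵀ * K * A) ^ n).mulVec (p t') := by
  have hq : ∀ t, HasDerivAt q (K *ᵥ (fstar - A *ᵥ p t)) t := fun t => hasDerivAt_pi.2 (hq' t)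
  have hp : ∀ t, HasDerivAt p (Kp *ᵥ (Aᵀ *ᵥ q t - Q)) t := fun t => hasDerivAt_pi.2 (hp' t)
  have step (M : Matrix (Fin I) (Fin J) ℝ) (hM : ∀ t t', M *ᵥ p t = M *ᵥ p t') :
      ∀ t t', (M * (Kp * Aᵀ * K * A)) *ᵥ p t = (M * (Kp * Aᵀ * K * A)) *ᵥ p t' := by
    simpa only [Matrix.mul_assoc] using
      mul_mul_mulVec_const_of_hasDerivAt_mulVec_sub_mulVec K A fstar hq _
        (mul_mul_mulVec_const_of_hasDerivAt_mulVec_mulVec_sub Kp Aᵀ Q hp M hM)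
  intro n
  induction n with
  | zero => simpa only [pow_zero, Matrix.mul_one] using
      mul_mul_mulVec_const_of_hasDerivAt_mulVec_sub_mulVec K A fstar hq C hconst
  | succ n ih => simpa only [pow_succ, Matrix.mul_assoc] using step _ ih

/-- If `q' = K·(f* − A·p)`, `p' = K_p·(Aᵀ·q − Q)` and
`t ↦ C·q(t)` is constant, then with `B = C·K·A` and `D = K_p·Aᵀ·K·A`, the
function `t ↦ B·Dⁿ·p(t)` is constant for every `n`. -/
theorem primal_dual_invariant_price_relations
    (N I J : ℕ) (hN : 0 < N) (hI : 0 < I) (hJ : 0 < J)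
    (C : Matrix (Fin I) (Fin N) ℝ)
    (K : Matrix (Fin N) (Fin N) ℝ)
    (A : Matrix (Fin N) (Fin J) ℝ)
    (Kp : Matrix (Fin J) (Fin J) ℝ)
    (fstar : Fin N → ℝ) (Q : Fin J → ℝ)
    (q : ℝ → Fin N → ℝ) (p : ℝ → Fin J → ℝ)
    (hq' : ∀ (t : ℝ) (i : Fin N),
      HasDerivAt (fun s => q s i) ((K.mulVec (fstar - A.mulVec (p t))) i) t)
    (hp' : ∀ (t : ℝ) (j : Fin J),
      HasDerivAt (fun s => p s j) ((Kp.mulVec (Aᵀ.mulVec (q t) - Q)) j) t)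
    (hconst : ∀ t t' : ℝ, C.mulVec (q t) = C.mulVec (q t')) :
    ∀ (n : ℕ) (t t' : ℝ),
      (C * K * A * (Kp * Aᵀ * K * A) ^ n).mulVec (p t) =
      (C * K * A * (Kp * Aᵀ * K * A) ^ n).mulVec (p t') :=
  primal_dual_invariant_price_relations_general N I J C K A Kp fstar Q q p hq' hp' hconst
end

section
/- Let n, m be positive integers, let D be an n×n matrix over ℂ, and let B be an m×n matrix over ℂ. Then the stacked (mn)×n matrix 𝓑 whose block rows are B, BD, BD², …, BD^{n−1} has full column rank n if and only if for every eigenvalue λ of D, the (m+n)×n matrix obtained by stacking B on top of D − λ·I_n has full column rank n. -/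
open Matrix

/-- Full column rank iff trivial kernel, for matrices with `Fin n` columns. -/
lemma rank_eq_n_iff_ker {p : Type*} [Fintype p] {n : ℕ} (A : Matrix p (Fin n) ℂ) :
    A.rank = n ↔ ∀ v : Fin n → ℂ, A.mulVec v = 0 → v = 0 := by
  have hrn := LinearMap.finrank_range_add_finrank_ker A.mulVecLin
  have hfin : Module.finrank ℂ (Fin n → ℂ) = n := by simp
  rw [hfin] at hrn
  have hkerbot : (LinearMap.ker A.mulVecLin = ⊥) ↔
      ∀ v : Fin n → ℂ, A.mulVec v = 0 → v = 0 := by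
    rw [LinearMap.ker_eq_bot']
    simp [Matrix.mulVecLin_apply]
  rw [← hkerbot, Matrix.rank]
  constructor
  · intro h
    have : Module.finrank ℂ (LinearMap.ker A.mulVecLin) = 0 := by omega
    exact Submodule.finrank_eq_zero.mp this
  · intro h
    rw [h] at hrn
    simpa using hrn

/-- Cayley–Hamilton consequence: `D ^ n` is a combination of lower powers. -/
lemma pow_card_eq_sum {n : ℕ} [NeZero n] (D : Matrix (Fin n) (Fin n) ℂ) :
    D ^ n = ∑ i ∈ Finset.range n, (-(D.charpoly.coeff i)) • D ^ i := by
  have h := D.aeval_self_charpoly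
  have hdeg : D.charpoly.natDegree = n := by
    simpa using D.charpoly_natDegree_eq_dim
  rw [Polynomial.aeval_eq_sum_range, hdeg, Finset.sum_range_succ] at h
  have hlead : D.charpoly.coeff n = 1 := by
    have := D.charpoly_monic
    rw [Polynomial.Monic, Polynomial.leadingCoeff, hdeg] at this
    exact this
  rw [hlead, one_smul] at h
  have := eq_neg_of_add_eq_zero_right h
  rw [this, ← Finset.sum_neg_distrib]
  exact Finset.sum_congr rfl fun i _ => (neg_smul _ _).symm

/-- The stacked matrix with block rows `B, BD, …, BD^{n−1}`
has full column rank `n` iff for every eigenvalue `λ` of `D`, the matrix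
obtained by stacking `B` on top of `D − λ·I` has full column rank `n`. -/
theorem stacked_observability_rank_iff
    (n m : ℕ) (hn : 0 < n) (hm : 0 < m)
    (D : Matrix (Fin n) (Fin n) ℂ)
    (B : Matrix (Fin m) (Fin n) ℂ) :
    (Matrix.of (fun (r : Fin n × Fin m) (j : Fin n) =>
        (B * D ^ (r.1 : ℕ)) r.2 j)).rank = n ↔
      ∀ lam : ℂ, (∃ v : Fin n → ℂ, v ≠ 0 ∧ D.mulVec v = lam • v) →
        (Matrix.fromRows B (D - lam • (1 : Matrix (Fin n) (Fin n) ℂ))).rank = n := by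
  haveI : NeZero n := ⟨hn.ne'⟩
  set S : Matrix (Fin n × Fin m) (Fin n) ℂ :=
    Matrix.of (fun (r : Fin n × Fin m) (j : Fin n) =>
        (B * D ^ (r.1 : ℕ)) r.2 j) with hS
  have hSmul : ∀ (v : Fin n → ℂ) (r : Fin n × Fin m),
      S.mulVec v r = (B * D ^ (r.1 : ℕ)).mulVec v r.2 := by
    intro v r; rfl
  rw [rank_eq_n_iff_ker]
  constructor
  · -- easy direction
    intro h lam _ 
    rw [rank_eq_n_iff_ker]
    intro v hv
    rw [Matrix.fromRows_mulVec] at hv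
    have hB : B.mulVec v = 0 := by
      funext i; exact congrFun hv (Sum.inl i)
    have hD : D.mulVec v = lam • v := by
      have h2 : (D - lam • (1 : Matrix (Fin n) (Fin n) ℂ)).mulVec v = 0 := by
        funext i; exact congrFun hv (Sum.inr i)
      rw [Matrix.sub_mulVec, sub_eq_zero] at h2
      rw [h2, Matrix.smul_mulVec, Matrix.one_mulVec]
    have hpow : ∀ k : ℕ, D ^ k *ᵥ v = lam ^ k • v := by
      intro k
      induction k with
      | zero => simp
      | succ k ih =>
        rw [pow_succ, ← Matrix.mulVec_mulVec, hD, Matrix.mulVec_smul, ih,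
          smul_smul, pow_succ, mul_comm]
    apply h v
    funext r
    rw [hSmul, ← Matrix.mulVec_mulVec, hpow, Matrix.mulVec_smul, hB]
    simp
  · -- hard direction
    intro h v hv
    by_contra hv0
    -- the joint kernel subspace
    set W : Submodule ℂ (Fin n → ℂ) :=
      ⨅ k : Fin n, LinearMap.ker (B * D ^ (k : ℕ)).mulVecLin with hW
    have memW : ∀ w : Fin n → ℂ, w ∈ W ↔
        ∀ k : Fin n, (B * D ^ (k : ℕ)).mulVec w = 0 := by
      intro w
      simp [hW, Submodule.mem_iInf, LinearMap.mem_ker, Matrix.mulVecLin_apply]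
    have hvW : v ∈ W := by
      rw [memW]
      intro k
      funext i
      have := congrFun hv (k, i)
      simpa [hSmul] using this
    -- W is D-invariant
    have hinv : ∀ w ∈ W, D.mulVecLin w ∈ W := by
      intro w hw
      rw [memW] at hw ⊢
      intro k
      rw [Matrix.mulVecLin_apply, Matrix.mulVec_mulVec]
      have key : ∀ j : ℕ, j ≤ n → (B * D ^ j).mulVec w = 0 := by
        intro j hj
        rcases lt_or_eq_of_le hj with hj | hj
        · exact hw ⟨j, hj⟩
        · rw [hj]
          have hBD : B * D ^ n
              = ∑ i ∈ Finset.range n, (-(D.charpoly.coeff i)) • (B * D ^ i) := by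
            rw [pow_card_eq_sum D, Matrix.mul_sum]
            exact Finset.sum_congr rfl fun i _ => Matrix.mul_smul _ _ _
          rw [hBD, show (∑ i ∈ Finset.range n, (-(D.charpoly.coeff i)) • (B * D ^ i)) *ᵥ w
              = ∑ i ∈ Finset.range n,
                  ((-(D.charpoly.coeff i)) • (B * D ^ i)) *ᵥ w from
            map_sum (Matrix.mulVec.addMonoidHomLeft w) _ _]
          apply Finset.sum_eq_zero
          intro i hi
          rw [Matrix.smul_mulVec, hw ⟨i, Finset.mem_range.mp hi⟩, smul_zero]
      have : B * D ^ (k : ℕ) * D = B * D ^ ((k : ℕ) + 1) := by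
        rw [Matrix.mul_assoc, ← pow_succ]
      rw [this]
      exact key _ k.isLt
    -- W is nontrivial
    haveI : Nontrivial W := by
      refine Submodule.nontrivial_iff_ne_bot.mpr ?_
      intro hbot
      apply hv0
      simpa [hbot] using hvW
    -- eigenvector of D restricted to W
    set f : Module.End ℂ W := (D.mulVecLin).restrict hinv with hf
    obtain ⟨c, hc⟩ := Module.End.exists_eigenvalue f
    obtain ⟨w, hwc⟩ := hc.exists_hasEigenvector
    have hw0 : (w : Fin n → ℂ) ≠ 0 := fun hz => hwc.2 (Subtype.ext hz)
    have hDw : D.mulVec (w : Fin n → ℂ) = c • (w : Fin n → ℂ) := by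
      have := hwc.apply_eq_smul
      have h2 := congrArg (Subtype.val) this
      simpa [hf, LinearMap.restrict_apply, Matrix.mulVecLin_apply] using h2
    have hBw : B.mulVec (w : Fin n → ℂ) = 0 := by
      have := (memW _).mp w.2 ⟨0, hn⟩
      simpa using this
    -- contradiction with hypothesis at eigenvalue c
    have hrank := h c ⟨w, hw0, hDw⟩
    rw [rank_eq_n_iff_ker] at hrank
    apply hw0
    apply hrank
    rw [Matrix.fromRows_mulVec]
    funext i
    cases i with
    | inl i => simpa using congrFun hBw i
    | inr i =>
      rw [Matrix.sub_mulVec, Matrix.smul_mulVec, Matrix.one_mulVec, hDw]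
      simp
end
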